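/- For α ∈ ℂ let 𝒵₁₄^α be ℂ⁵ with basis e₁,…,e₅ and bilinear multiplication given by e₁e₁ = α e₅, e₁e₂ = e₃, e₁e₄ = e₅, e₂e₁ = -e₃, e₂e₃ = e₅, e₄e₄ = e₅, all other basis products zero. If α, β ∈ ℂ and α ≠ β, then 𝒵₁₄^α and 𝒵₁₄^β are not isomorphic: there is no linear bijection φ : ℂ⁵ → ℂ⁵ with φ(x·_α y) = φ(x)·_β φ(y) for all x,y ∈ ℂ⁵. -/
import Mathlib


/-- The standard basis of `ℂ⁵`. -/
def ee (i : Fin 5) : Fin 5 → ℂ := Pi.single i 1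

/-- Structure constants (0-indexed) of the algebra `𝒵₁₄^α`:
`e₁e₁ = α e₅`, `e₁e₂ = e₃`, `e₁e₄ = e₅`, `e₂e₁ = -e₃`, `e₂e₃ = e₅`, `e₄e₄ = e₅`. -/
def cZ14 (α : ℂ) (i j : Fin 5) : Fin 5 → ℂ :=
  if i = 0 ∧ j = 0 then α • ee 4
  else if i = 0 ∧ j = 1 then ee 2
  else if i = 0 ∧ j = 3 then ee 4
  else if i = 1 ∧ j = 0 then -ee 2
  else if i = 1 ∧ j = 2 then ee 4
  else if i = 3 ∧ j = 3 then ee 4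
  else 0

theorem Z14_hbasis (x : Fin 5 → ℂ) : x = ∑ i, x i • ee i := by
  funext j
  simp [ee, Finset.sum_apply, Pi.single_apply]

theorem Z14_hexp (γ : ℂ) (μ : (Fin 5 → ℂ) →ₗ[ℂ] (Fin 5 → ℂ) →ₗ[ℂ] (Fin 5 → ℂ))
    (h : ∀ i j, μ (ee i) (ee j) = cZ14 γ i j) (x y : Fin 5 → ℂ) (m : Fin 5) :
    μ x y m = ∑ k : Fin 5, ∑ l : Fin 5, x k * y l * cZ14 γ k l m := by
  have hv : μ x y = ∑ k : Fin 5, ∑ l : Fin 5, (x k * y l) • cZ14 γ k l := by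
    conv_lhs => rw [Z14_hbasis x, Z14_hbasis y]
    simp only [map_sum, map_smul, LinearMap.sum_apply, LinearMap.smul_apply, h, Finset.smul_sum,
      smul_smul]
    rw [Finset.sum_comm]
    congr 1; funext k; congr 1; funext l; rw [mul_comm]
  rw [hv]
  simp [Finset.sum_apply, Pi.smul_apply, smul_eq_mul]

theorem Z14_hc2 (γ : ℂ) (μ : (Fin 5 → ℂ) →ₗ[ℂ] (Fin 5 → ℂ) →ₗ[ℂ] (Fin 5 → ℂ))
    (h : ∀ i j, μ (ee i) (ee j) = cZ14 γ i j) (x y : Fin 5 → ℂ) :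
    μ x y 2 = x 0 * y 1 - x 1 * y 0 := by
  rw [Z14_hexp γ μ h]
  simp [Fin.sum_univ_five, cZ14, ee, Pi.single_apply]
  ring

theorem Z14_hc4 (γ : ℂ) (μ : (Fin 5 → ℂ) →ₗ[ℂ] (Fin 5 → ℂ) →ₗ[ℂ] (Fin 5 → ℂ))
    (h : ∀ i j, μ (ee i) (ee j) = cZ14 γ i j) (x y : Fin 5 → ℂ) :
    μ x y 4 = γ * (x 0 * y 0) + x 0 * y 3 + x 1 * y 2 + x 3 * y 3 := by
  rw [Z14_hexp γ μ h]
  simp [Fin.sum_univ_five, cZ14, ee, Pi.single_apply]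
  ring

/-- for `α ≠ β` the algebras `𝒵₁₄^α` and `𝒵₁₄^β` are not
isomorphic. -/
theorem Z14_pairwise_nonisomorphic (α β : ℂ) (hαβ : α ≠ β)
    (μα μβ : (Fin 5 → ℂ) →ₗ[ℂ] (Fin 5 → ℂ) →ₗ[ℂ] (Fin 5 → ℂ))
    (hμα : ∀ i j, μα (ee i) (ee j) = cZ14 α i j)
    (hμβ : ∀ i j, μβ (ee i) (ee j) = cZ14 β i j) :
    ¬ ∃ φ : (Fin 5 → ℂ) ≃ₗ[ℂ] (Fin 5 → ℂ),
      ∀ x y : Fin 5 → ℂ, φ (μα x y) = μβ (φ x) (φ y) := by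
  rintro ⟨φ, hφ⟩
  -- `ee 4` is a two-sided annihilator of `μα`, `ee 2` a left annihilator
  have hα4l : ∀ x : Fin 5 → ℂ, μα (ee 4) x = 0 := by
    intro x; funext m
    rw [Z14_hexp α μα hμα]
    simp [Fin.sum_univ_five, cZ14, ee, Pi.single_apply]
  have hα4r : ∀ x : Fin 5 → ℂ, μα x (ee 4) = 0 := by
    intro x; funext m
    rw [Z14_hexp α μα hμα]
    simp [Fin.sum_univ_five, cZ14, ee, Pi.single_apply]
  have hα2l : ∀ x : Fin 5 → ℂ, μα (ee 2) x = 0 := by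
    intro x; funext m
    rw [Z14_hexp α μα hμα]
    simp [Fin.sum_univ_five, cZ14, ee, Pi.single_apply]
  -- hence `φ (ee 4)` and `φ (ee 2)` annihilate on the corresponding sides in `μβ`
  have hV : ∀ z : Fin 5 → ℂ, μβ (φ (ee 4)) z = 0 := by
    intro z
    have h := hφ (ee 4) (φ.symm z)
    rw [hα4l, map_zero, φ.apply_symm_apply] at h
    exact h.symm
  have hVr : ∀ z : Fin 5 → ℂ, μβ z (φ (ee 4)) = 0 := by
    intro z
    have h := hφ (φ.symm z) (ee 4)
    rw [hα4r, map_zero, φ.apply_symm_apply] at h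
    exact h.symm
  have hW : ∀ z : Fin 5 → ℂ, μβ (φ (ee 2)) z = 0 := by
    intro z
    have h := hφ (ee 2) (φ.symm z)
    rw [hα2l, map_zero, φ.apply_symm_apply] at h
    exact h.symm
  set V := φ (ee 4) with hVdef
  set W := φ (ee 2) with hWdef
  set A := φ (ee 0) with hAdef
  set B := φ (ee 1) with hBdef
  set D := φ (ee 3) with hDdef
  -- components of V
  have hV0 : V 0 = 0 := by
    have h := congrFun (hV (ee 1)) 2
    rw [Z14_hc2 β μβ hμβ] at h
    simpa [ee, Pi.single_apply] using h
  have hV1 : V 1 = 0 := by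
    have h := congrFun (hV (ee 0)) 2
    rw [Z14_hc2 β μβ hμβ] at h
    simpa [ee, Pi.single_apply] using h
  have hV2 : V 2 = 0 := by
    have h := congrFun (hVr (ee 1)) 4
    rw [Z14_hc4 β μβ hμβ] at h
    simpa [ee, Pi.single_apply] using h
  have hV3 : V 3 = 0 := by
    have h := congrFun (hVr (ee 3)) 4
    rw [Z14_hc4 β μβ hμβ] at h
    simpa [ee, Pi.single_apply, hV0] using h
  have ht : V 4 ≠ 0 := by
    intro h0
    have hVz : V = 0 := by
      funext m
      fin_cases m
      · exact hV0
      · exact hV1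
      · exact hV2
      · exact hV3
      · exact h0
    have : (ee 4 : Fin 5 → ℂ) = 0 := by
      apply φ.injective
      rw [← hVdef, hVz, map_zero]
    have := congrFun this 4
    simp [ee] at this
  -- components of W
  have hW0 : W 0 = 0 := by
    have h := congrFun (hW (ee 1)) 2
    rw [Z14_hc2 β μβ hμβ] at h
    simpa [ee, Pi.single_apply] using h
  have hW1 : W 1 = 0 := by
    have h := congrFun (hW (ee 0)) 2
    rw [Z14_hc2 β μβ hμβ] at h
    simpa [ee, Pi.single_apply] using h
  have hW3 : W 3 = 0 := by
    have h := congrFun (hW (ee 3)) 4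
    rw [Z14_hc4 β μβ hμβ] at h
    simpa [ee, Pi.single_apply, hW0, hW1] using h
  -- structure equations
  -- (1,2): μα e1 e2 = e4, so t = B1 * p
  have E6 : B 1 * W 2 = V 4 := by
    have h := hφ (ee 1) (ee 2)
    rw [hμα, show cZ14 α 1 2 = ee 4 from rfl] at h
    have h4 := congrFun h 4
    rw [Z14_hc4 β μβ hμβ] at h4
    rw [← hVdef, ← hBdef, ← hWdef] at h4
    linear_combination -h4 - β * B 0 * hW0 - B 0 * hW3 - B 3 * hW3
  have hp : W 2 ≠ 0 := fun h0 => ht (by rw [← E6, h0, mul_zero])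
  have hB1 : B 1 ≠ 0 := fun h0 => ht (by rw [← E6, h0, zero_mul])
  -- (0,2): 0 = A1 * p
  have E12 : A 1 = 0 := by
    have h := hφ (ee 0) (ee 2)
    rw [hμα, show cZ14 α 0 2 = 0 from rfl, map_zero] at h
    have h4 := (congrFun h 4).symm
    simp only [Pi.zero_apply] at h4
    rw [Z14_hc4 β μβ hμβ] at h4
    rw [← hAdef, ← hWdef] at h4
    have : A 1 * W 2 = 0 := by
      linear_combination h4 - β * A 0 * hW0 - A 0 * hW3 - A 3 * hW3
    rcases mul_eq_zero.mp this with h | h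
    · exact h
    · exact absurd h hp
  -- (3,2): 0 = D1 * p
  have E13 : D 1 = 0 := by
    have h := hφ (ee 3) (ee 2)
    rw [hμα, show cZ14 α 3 2 = 0 from rfl, map_zero] at h
    have h4 := (congrFun h 4).symm
    simp only [Pi.zero_apply] at h4
    rw [Z14_hc4 β μβ hμβ] at h4
    rw [← hDdef, ← hWdef] at h4
    have : D 1 * W 2 = 0 := by
      linear_combination h4 - β * D 0 * hW0 - D 0 * hW3 - D 3 * hW3
    rcases mul_eq_zero.mp this with h | h
    · exact h
    · exact absurd h hp
  -- (1,3): 0 = B0*D1 - B1*D0, so D0 = 0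
  have E9 : D 0 = 0 := by
    have h := hφ (ee 1) (ee 3)
    rw [hμα, show cZ14 α 1 3 = 0 from rfl, map_zero] at h
    have h2 := (congrFun h 2).symm
    simp only [Pi.zero_apply] at h2
    rw [Z14_hc2 β μβ hμβ] at h2
    rw [← hBdef, ← hDdef] at h2
    have : B 1 * D 0 = 0 := by linear_combination -h2 + B 0 * E13
    rcases mul_eq_zero.mp this with h | h
    · exact absurd h hB1
    · exact h
  -- (0,1): p = A0 * B1
  have E2 : A 0 * B 1 = W 2 := by
    have h := hφ (ee 0) (ee 1)
    rw [hμα, show cZ14 α 0 1 = ee 2 from rfl] at h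
    have h2 := congrFun h 2
    rw [Z14_hc2 β μβ hμβ] at h2
    rw [← hWdef, ← hAdef, ← hBdef] at h2
    linear_combination -h2 + B 0 * E12
  have hA0 : A 0 ≠ 0 := by
    intro h0
    exact hp (by rw [← E2, h0, zero_mul])
  -- (3,0): 0 = D3 * A3
  have E5 : D 3 * A 3 = 0 := by
    have h := hφ (ee 3) (ee 0)
    rw [hμα, show cZ14 α 3 0 = 0 from rfl, map_zero] at h
    have h4 := (congrFun h 4).symm
    simp only [Pi.zero_apply] at h4
    rw [Z14_hc4 β μβ hμβ] at h4
    rw [← hDdef, ← hAdef] at h4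
    linear_combination h4 - β * A 0 * E9 - A 3 * E9 - A 2 * E13
  -- (3,3): t = D3^2
  have E11 : D 3 * D 3 = V 4 := by
    have h := hφ (ee 3) (ee 3)
    rw [hμα, show cZ14 α 3 3 = ee 4 from rfl] at h
    have h4 := congrFun h 4
    rw [Z14_hc4 β μβ hμβ] at h4
    rw [← hVdef, ← hDdef] at h4
    linear_combination -h4 - β * D 0 * E9 - D 3 * E9 - D 2 * E13
  have hD3 : D 3 ≠ 0 := fun h0 => ht (by rw [← E11, h0, zero_mul])
  have hA3 : A 3 = 0 := by
    rcases mul_eq_zero.mp E5 with h | h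
    · exact absurd h hD3
    · exact h
  -- (0,3): t = A0 * D3
  have E4 : A 0 * D 3 = V 4 := by
    have h := hφ (ee 0) (ee 3)
    rw [hμα, show cZ14 α 0 3 = ee 4 from rfl] at h
    have h4 := congrFun h 4
    rw [Z14_hc4 β μβ hμβ] at h4
    rw [← hVdef, ← hAdef, ← hDdef] at h4
    linear_combination -h4 - β * A 0 * E9 - D 2 * E12 - D 3 * hA3
  -- D3 = A0
  have hD3A0 : D 3 = A 0 := by
    have : D 3 * D 3 = A 0 * D 3 := by rw [E11, E4]
    exact mul_right_cancel₀ hD3 this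
  -- (0,0): α t = β A0^2
  have E1 : β * (A 0 * A 0) = α * V 4 := by
    have h := hφ (ee 0) (ee 0)
    rw [hμα, show cZ14 α 0 0 = α • ee 4 from rfl, map_smul] at h
    rw [← hVdef] at h
    have h4 := congrFun h 4
    simp only [Pi.smul_apply, smul_eq_mul] at h4
    rw [Z14_hc4 β μβ hμβ] at h4
    rw [← hAdef] at h4
    linear_combination -h4 - A 0 * hA3 - A 2 * E12 - A 3 * hA3
  -- conclude α = β
  apply hαβ
  have hVt : V 4 = A 0 * A 0 := by rw [← E4, hD3A0]
  rw [hVt] at E1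
  have hA00 : A 0 * A 0 ≠ 0 := mul_ne_zero hA0 hA0
  exact (mul_right_cancel₀ hA00 E1).symm
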